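/- arXiv:2307.16731 — 2 statements merged into one kernel-verified Lean document; each statement's English description precedes it below -/
import Mathlib

section
/- Any procedure that transforms a connected configuration of n particles of diameter at most 2√n + 2 on the triangular grid into a connected collinear configuration of n particles requires Ω(n²) total single-edge movements: specifically, the sum over particles of the grid distance between initial and final positions is Ω(n²), and each movement changes one particle's position by one edge. -/
/-- Word-metric distance on the triangular grid (as an integer). -/
def tdist (a b : ℤ × ℤ) : ℤ :=
  max (max |b.1 - a.1| |b.2 - a.2|) |b.1 - a.1 + (b.2 - a.2)|

lemma tdist_x_le (a b : ℤ × ℤ) : |b.1 - a.1| ≤ tdist a b :=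
  le_trans (le_max_left _ _) (le_max_left _ _)

lemma tdist_y_le (a b : ℤ × ℤ) : |b.2 - a.2| ≤ tdist a b :=
  le_trans (le_max_right _ _) (le_max_left _ _)

lemma tdist_z_le (a b : ℤ × ℤ) : |b.1 - a.1 + (b.2 - a.2)| ≤ tdist a b :=
  le_max_right _ _

lemma tdist_nonneg' (a b : ℤ × ℤ) : 0 ≤ tdist a b :=
  le_trans (abs_nonneg _) (tdist_x_le a b)

lemma tdist_triangle (a b c : ℤ × ℤ) : tdist a c ≤ tdist a b + tdist b c := by
  have hx : |c.1 - a.1| ≤ tdist a b + tdist b c := by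
    calc |c.1 - a.1| = |(b.1 - a.1) + (c.1 - b.1)| := by ring_nf
    _ ≤ |b.1 - a.1| + |c.1 - b.1| := abs_add_le _ _
    _ ≤ _ := add_le_add (tdist_x_le a b) (tdist_x_le b c)
  have hy : |c.2 - a.2| ≤ tdist a b + tdist b c := by
    calc |c.2 - a.2| = |(b.2 - a.2) + (c.2 - b.2)| := by ring_nf
    _ ≤ |b.2 - a.2| + |c.2 - b.2| := abs_add_le _ _
    _ ≤ _ := add_le_add (tdist_y_le a b) (tdist_y_le b c)
  have hz : |c.1 - a.1 + (c.2 - a.2)| ≤ tdist a b + tdist b c := by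
    calc |c.1 - a.1 + (c.2 - a.2)|
        = |(b.1 - a.1 + (b.2 - a.2)) + (c.1 - b.1 + (c.2 - b.2))| := by ring_nf
    _ ≤ _ := le_trans (abs_add_le _ _) (add_le_add (tdist_z_le a b) (tdist_z_le b c))
  exact max_le (max_le hx hy) hz

lemma reflect_bound (a : ℤ) (n : ℕ) :
    ∑ i ∈ Finset.range n, |(n : ℤ) - 1 - 2 * i| ≤ 2 * ∑ i ∈ Finset.range n, |a + i| := by
  have hrefl : ∑ i ∈ Finset.range n, |a + ((n : ℤ) - 1 - i)| = ∑ i ∈ Finset.range n, |a + i| := by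
    rw [← Finset.sum_range_reflect (fun i => |a + i|) n]
    apply Finset.sum_congr rfl
    intro i hi
    have hi' := Finset.mem_range.mp hi
    congr 1
    have : ((n - 1 - i : ℕ) : ℤ) = (n : ℤ) - 1 - i := by omega
    rw [this]
  calc ∑ i ∈ Finset.range n, |(n : ℤ) - 1 - 2 * i|
      ≤ ∑ i ∈ Finset.range n, (|a + ((n : ℤ) - 1 - i)| + |a + i|) := by
        apply Finset.sum_le_sum
        intro i _
        have h := abs_sub (a + ((n : ℤ) - 1 - i)) (a + i)
        have he : (a + ((n : ℤ) - 1 - i)) - (a + i) = (n : ℤ) - 1 - 2 * i := by ring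
        rw [he] at h
        exact h
    _ = 2 * ∑ i ∈ Finset.range n, |a + i| := by
        rw [Finset.sum_add_distrib, hrefl]; ring

lemma mid_bound (n : ℕ) :
    ((n : ℤ) ^ 2 - 3 * n) ≤ 8 * ∑ i ∈ Finset.range n, |(n : ℤ) - 1 - 2 * i| := by
  rcases le_or_gt n 3 with h | h
  · have h1 : ((n : ℤ) ^ 2 - 3 * n) ≤ 0 := by
      interval_cases n <;> norm_num
    have h2 : 0 ≤ ∑ i ∈ Finset.range n, |(n : ℤ) - 1 - 2 * i| :=
      Finset.sum_nonneg fun i _ => abs_nonneg _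
    linarith
  · have hsub : Finset.range (n / 4) ⊆ Finset.range n := by
      apply Finset.range_subset_range.mpr; omega
    have h1 : ∑ i ∈ Finset.range (n / 4), |(n : ℤ) - 1 - 2 * i|
        ≤ ∑ i ∈ Finset.range n, |(n : ℤ) - 1 - 2 * i| :=
      Finset.sum_le_sum_of_subset_of_nonneg hsub (fun i _ _ => abs_nonneg _)
    have h2 : ∀ i ∈ Finset.range (n / 4), ((n : ℤ)) ≤ 2 * |(n : ℤ) - 1 - 2 * i| := by
      intro i hi
      have hi' := Finset.mem_range.mp hi
      have h4 : 4 * i + 4 ≤ n := by omega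
      have h4' : 4 * (i : ℤ) + 4 ≤ n := by exact_mod_cast h4
      have hpos : 0 ≤ (n : ℤ) - 1 - 2 * i := by omega
      rw [abs_of_nonneg hpos]; omega
    have h3 : ((n / 4 : ℕ) : ℤ) * n ≤ 2 * ∑ i ∈ Finset.range (n / 4), |(n : ℤ) - 1 - 2 * i| := by
      calc ((n / 4 : ℕ) : ℤ) * n = ∑ _i ∈ Finset.range (n / 4), (n : ℤ) := by
            rw [Finset.sum_const, Finset.card_range]; ring
      _ ≤ ∑ i ∈ Finset.range (n / 4), 2 * |(n : ℤ) - 1 - 2 * i| := Finset.sum_le_sum h2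
      _ = 2 * ∑ i ∈ Finset.range (n / 4), |(n : ℤ) - 1 - 2 * i| := by
            rw [Finset.mul_sum]
    have h5 : (n : ℤ) - 3 ≤ 4 * ((n / 4 : ℕ) : ℤ) := by
      have := Nat.div_mul_le_self n 4
      omega
    nlinarith [Int.ofNat_nonneg n]

lemma key_sum (a : ℤ) (n : ℕ) :
    ((n : ℤ) ^ 2 - 3 * n) ≤ 16 * ∑ i ∈ Finset.range n, |a + i| := by
  have h1 := reflect_bound a n
  have h2 := mid_bound n
  linarith

/-- Transforming an `n`-particle configuration of diameter at most `2√n + 2`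
into `n` consecutive collinear nodes requires total displacement `Ω(n²)`:
for some `c > 0` and all large `n`, every bijection has total displacement
at least `c·n²`. -/
theorem stmt_9 :
    ∃ c : ℝ, 0 < c ∧ ∃ N : ℕ, ∀ n : ℕ, N ≤ n →
      ∀ S L : Finset (ℤ × ℤ), S.card = n →
        (∀ a ∈ S, ∀ b ∈ S, (tdist a b : ℝ) ≤ 2 * Real.sqrt n + 2) →
        (∃ x₀ y₀ : ℤ, L = (Finset.range n).image (fun i : ℕ => ((x₀ + (i : ℤ), y₀) : ℤ × ℤ))) →
        ∀ f : ℤ × ℤ → ℤ × ℤ, Set.BijOn f ↑S ↑L →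
          c * n ^ 2 ≤ ∑ v ∈ S, (tdist v (f v) : ℝ) := by
  refine ⟨1 / 100, by norm_num, 10000, ?_⟩
  intro n hn S L hcard hdiam ⟨x₀, y₀, hLdef⟩ f hbij
  have hnpos : 0 < n := by omega
  obtain ⟨s0, hs0⟩ := Finset.card_pos.mp (hcard ▸ hnpos)
  -- step 1: per-particle triangle inequality
  have h1 : ∀ v ∈ S, (tdist s0 (f v) : ℝ) - (tdist s0 v : ℝ) ≤ (tdist v (f v) : ℝ) := by
    intro v _
    have := tdist_triangle s0 v (f v)
    have : (tdist s0 (f v) : ℝ) ≤ (tdist s0 v : ℝ) + (tdist v (f v) : ℝ) := by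
      exact_mod_cast this
    linarith
  have hsum1 : ∑ v ∈ S, ((tdist s0 (f v) : ℝ) - (tdist s0 v : ℝ))
      ≤ ∑ v ∈ S, (tdist v (f v) : ℝ) := Finset.sum_le_sum h1
  -- step 2: reindex via bijection
  have hLsum : ∑ v ∈ S, (tdist s0 (f v) : ℝ) = ∑ w ∈ L, (tdist s0 w : ℝ) := by
    apply Finset.sum_bij (fun a _ => f a)
    · intro a ha
      exact hbij.mapsTo ha
    · intro a₁ ha₁ a₂ ha₂ h
      exact hbij.injOn ha₁ ha₂ h
    · intro b hb
      obtain ⟨a, ha, hfa⟩ := hbij.surjOn hb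
      exact ⟨a, ha, hfa⟩
    · intro a _; rfl
  -- step 3: lower bound for sum over L
  have hline : ∑ w ∈ L, (tdist s0 w : ℤ) ≥ ∑ i ∈ Finset.range n, |(x₀ - s0.1) + (i : ℤ)| := by
    rw [hLdef, Finset.sum_image]
    · apply Finset.sum_le_sum
      intro i _
      calc |(x₀ - s0.1) + (i : ℤ)| = |(x₀ + (i : ℤ), y₀).1 - s0.1| := by
            simp; ring_nf
      _ ≤ tdist s0 (x₀ + (i : ℤ), y₀) := tdist_x_le _ _
    · intro i _ j _ h
      have := congrArg Prod.fst h
      simp at this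
      omega
  have hkey := key_sum (x₀ - s0.1) n
  have hline2 : ((n : ℤ) ^ 2 - 3 * n : ℤ) ≤ 16 * ∑ w ∈ L, (tdist s0 w : ℤ) := by
    linarith
  have hline3 : ((n : ℝ) ^ 2 - 3 * n) / 16 ≤ ∑ w ∈ L, (tdist s0 w : ℝ) := by
    have : (((n : ℤ) ^ 2 - 3 * n : ℤ) : ℝ) ≤ ((16 * ∑ w ∈ L, (tdist s0 w : ℤ) : ℤ) : ℝ) := by
      exact_mod_cast hline2
    push_cast at this
    linarith
  -- step 4: upper bound on distances within S
  have hS : ∑ v ∈ S, (tdist s0 v : ℝ) ≤ n * (2 * Real.sqrt n + 2) := by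
    calc ∑ v ∈ S, (tdist s0 v : ℝ) ≤ ∑ _v ∈ S, (2 * Real.sqrt n + 2) :=
          Finset.sum_le_sum (fun v hv => hdiam s0 hs0 v hv)
    _ = n * (2 * Real.sqrt n + 2) := by rw [Finset.sum_const, hcard, nsmul_eq_mul]
  -- step 5: sqrt bound
  have hn' : (10000 : ℝ) ≤ n := by exact_mod_cast hn
  have hsq : Real.sqrt n ≤ (n : ℝ) / 100 := by
    rw [show ((n : ℝ) / 100) = Real.sqrt (((n : ℝ) / 100) ^ 2) by
      rw [Real.sqrt_sq (by positivity)]]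
    apply Real.sqrt_le_sqrt
    nlinarith
  -- combine
  have hfinal : ∑ v ∈ S, ((tdist s0 (f v) : ℝ) - (tdist s0 v : ℝ))
      = ∑ w ∈ L, (tdist s0 w : ℝ) - ∑ v ∈ S, (tdist s0 v : ℝ) := by
    rw [Finset.sum_sub_distrib, hLsum]
  rw [hfinal] at hsum1
  have hsqrt_nonneg : 0 ≤ Real.sqrt n := Real.sqrt_nonneg _
  nlinarith [hsum1, hline3, hS, hsq, hn']
end

section
/- For the ball of radius r in the triangular grid centered at the origin (with n = 3r²+3r+1 nodes) and any target set of n consecutive collinear nodes, any bijection f from the ball to the target satisfies Σ_v d(v, f(v)) ≥ n²/8 − O(n^{3/2}). -/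
lemma tdist_tri (v w : ℤ × ℤ) : tdist (0,0) w ≤ tdist v w + tdist (0,0) v := by
  have h1 : |w.1 - v.1| ≤ tdist v w := le_trans (le_max_left _ _) (le_max_left _ _)
  have h2 : |w.2 - v.2| ≤ tdist v w := le_trans (le_max_right _ _) (le_max_left _ _)
  have h3 : |w.1 - v.1 + (w.2 - v.2)| ≤ tdist v w := le_max_right _ _
  have g1 : |v.1 - 0| ≤ tdist (0,0) v := le_trans (le_max_left _ _) (le_max_left _ _)
  have g2 : |v.2 - 0| ≤ tdist (0,0) v := le_trans (le_max_right _ _) (le_max_left _ _)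
  have g3 : |v.1 - 0 + (v.2 - 0)| ≤ tdist (0,0) v := le_max_right _ _
  simp only [sub_zero] at g1 g2 g3
  show max (max |w.1 - 0| |w.2 - 0|) |w.1 - 0 + (w.2 - 0)| ≤ _
  simp only [sub_zero]
  refine max_le (max_le ?_ ?_) ?_
  · calc |w.1| = |(w.1 - v.1) + v.1| := by ring_nf
      _ ≤ |w.1 - v.1| + |v.1| := abs_add_le _ _
      _ ≤ _ := add_le_add h1 g1
  · calc |w.2| = |(w.2 - v.2) + v.2| := by ring_nf
      _ ≤ |w.2 - v.2| + |v.2| := abs_add_le _ _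
      _ ≤ _ := add_le_add h2 g2
  · calc |w.1 + w.2| = |(w.1 - v.1 + (w.2 - v.2)) + (v.1 + v.2)| := by ring_nf
      _ ≤ |w.1 - v.1 + (w.2 - v.2)| + |v.1 + v.2| := abs_add_le _ _
      _ ≤ _ := add_le_add h3 g3

lemma fst_le_tdist (w : ℤ × ℤ) : |w.1| ≤ tdist (0,0) w := by
  have : |w.1 - 0| ≤ tdist (0,0) w := le_trans (le_max_left _ _) (le_max_left _ _)
  simpa using this

lemma abs_sum_lb : ∀ (n : ℕ) (c : ℤ), (n:ℤ)^2 - 1 ≤ 4 * ∑ i ∈ Finset.range n, |c + i| := by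
  intro n
  induction n using Nat.strong_induction_on with
  | _ n ih =>
    match n with
    | 0 => intro c; simp
    | 1 => intro c; simpa using abs_nonneg c
    | (n+2) =>
      intro c
      have hih := ih n (by omega) (c + 1)
      rw [Finset.sum_range_succ, Finset.sum_range_succ']
      have hsum : ∑ i ∈ Finset.range n, |c + ((i:ℤ)+1)|
          = ∑ i ∈ Finset.range n, |(c+1) + (i:ℤ)| := by
        apply Finset.sum_congr rfl; intro i _; ring_nf
      push_cast
      rw [hsum]
      have hb : (n:ℤ) + 1 ≤ |c + 0| + |c + ((n:ℤ)+1)| := by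
        have := neg_abs_le (c + 0)
        have := le_abs_self (c + ((n:ℤ)+1))
        omega
      push_cast at hih
      nlinarith [hb, hih]

/-- For the ball of radius `r` (with `n = 3r²+3r+1` nodes) and any segment of
`n` consecutive collinear nodes, every bijection `f` from the ball to the
segment has total displacement at least `n²/8 − O(n^{3/2})`. -/
theorem stmt_17 :
    ∃ K : ℝ, 0 < K ∧ ∀ r : ℕ, ∀ x₀ y₀ : ℤ, ∀ f : ℤ × ℤ → ℤ × ℤ,
      let n : ℕ := 3 * r ^ 2 + 3 * r + 1
      let B : Finset (ℤ × ℤ) :=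
        ((Finset.Icc (-(r : ℤ)) r) ×ˢ (Finset.Icc (-(r : ℤ)) r)).filter
          (fun v => tdist (0, 0) v ≤ (r : ℤ))
      let L : Finset (ℤ × ℤ) := (Finset.range n).image (fun i : ℕ => ((x₀ + (i : ℤ), y₀) : ℤ × ℤ))
      Set.BijOn f ↑B ↑L →
        (n : ℝ) ^ 2 / 8 - K * (n : ℝ) ^ ((3 : ℝ) / 2) ≤
          ∑ v ∈ B, (tdist v (f v) : ℝ) := by
  refine ⟨2, by norm_num, ?_⟩
  intro r x₀ y₀ f n B L hbij
  have hn : n = 3 * r ^ 2 + 3 * r + 1 := rfl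
  -- injectivity of the segment parametrization
  have hinj : Function.Injective (fun i : ℕ => ((x₀ + (i : ℤ), y₀) : ℤ × ℤ)) := by
    intro i j h
    simp only [Prod.mk.injEq] at h
    omega
  have hcardL : L.card = n := by
    rw [Finset.card_image_of_injective _ hinj, Finset.card_range]
  have hcardB : B.card = n := by
    rw [← hcardL]
    exact Finset.card_bij (fun a _ => f a)
      (fun a ha => hbij.mapsTo ha)
      (fun a₁ h₁ a₂ h₂ h => hbij.injOn h₁ h₂ h)
      (fun b hb => by
        obtain ⟨a, ha, hfa⟩ := hbij.surjOn hb
        exact ⟨a, ha, hfa⟩)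
  -- transfer sum over L to sum over B
  have hsumeq : ∑ w ∈ L, tdist (0,0) w = ∑ v ∈ B, tdist (0,0) (f v) := by
    refine (Finset.sum_bij (fun a _ => f a)
      (fun a ha => hbij.mapsTo ha)
      (fun a₁ h₁ a₂ h₂ h => hbij.injOn h₁ h₂ h)
      (fun b hb => by obtain ⟨a, ha, hfa⟩ := hbij.surjOn hb; exact ⟨a, ha, hfa⟩)
      (fun a _ => rfl)).symm
  -- each v ∈ B has tdist 0 v ≤ r
  have hvr : ∀ v ∈ B, tdist (0,0) v ≤ (r:ℤ) := by
    intro v hv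
    simp only [B, Finset.mem_filter] at hv
    exact hv.2
  -- lower bound the sum over L
  have hL1 : ∑ i ∈ Finset.range n, |x₀ + (i:ℤ)| ≤ ∑ w ∈ L, tdist (0,0) w := by
    rw [Finset.sum_image (fun i _ j _ h => hinj h)]
    exact Finset.sum_le_sum fun i _ => fst_le_tdist _
  have hL2 : (n:ℤ)^2 - 1 ≤ 4 * ∑ w ∈ L, tdist (0,0) w := by
    have := abs_sum_lb n x₀
    omega
  -- combine with triangle inequality
  have hB1 : ∑ v ∈ B, tdist (0,0) (f v) ≤
      (∑ v ∈ B, tdist v (f v)) + (n:ℤ) * r := by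
    calc ∑ v ∈ B, tdist (0,0) (f v)
        ≤ ∑ v ∈ B, (tdist v (f v) + tdist (0,0) v) :=
          Finset.sum_le_sum fun v _ => tdist_tri v (f v)
      _ = (∑ v ∈ B, tdist v (f v)) + ∑ v ∈ B, tdist (0,0) v := Finset.sum_add_distrib
      _ ≤ (∑ v ∈ B, tdist v (f v)) + (n:ℤ) * r := by
          have : ∑ v ∈ B, tdist (0,0) v ≤ B.card • (r:ℤ) :=
            Finset.sum_le_card_nsmul _ _ _ hvr
          rw [hcardB] at this
          simpa [nsmul_eq_mul] using this
  have hZ : (n:ℤ)^2 - 1 - 4 * n * r ≤ 4 * ∑ v ∈ B, tdist v (f v) := by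
    rw [hsumeq] at hL2
    linarith
  -- move to the reals
  set S : ℝ := ∑ v ∈ B, (tdist v (f v) : ℝ) with hS
  have hSZ : S = ((∑ v ∈ B, tdist v (f v) : ℤ) : ℝ) := by
    rw [hS]; push_cast; ring
  have hR : (n:ℝ)^2 - 1 - 4 * n * r ≤ 4 * S := by
    rw [hSZ]
    exact_mod_cast hZ
  have hn1 : (1:ℝ) ≤ (n:ℝ) := by
    have : 1 ≤ n := by omega
    exact_mod_cast this
  have hrsq : ((r:ℝ))^2 ≤ (n:ℝ) := by
    have : r^2 ≤ n := by omega
    exact_mod_cast this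
  have hrs : (r:ℝ) ≤ Real.sqrt n := by
    have := Real.sqrt_le_sqrt hrsq
    rwa [Real.sqrt_sq (by positivity)] at this
  have hpow : (n:ℝ) ^ ((3:ℝ)/2) = (n:ℝ) * Real.sqrt n := by
    have h32 : ((3:ℝ)/2) = 1 + 1/2 := by norm_num
    rw [h32, Real.rpow_add (by linarith), Real.rpow_one, ← Real.sqrt_eq_rpow]
  have hsq1 : (1:ℝ) ≤ Real.sqrt n := by
    rw [show (1:ℝ) = Real.sqrt 1 by simp]
    exact Real.sqrt_le_sqrt hn1
  have hnr : (n:ℝ) * r ≤ (n:ℝ) ^ ((3:ℝ)/2) := by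
    rw [hpow]
    exact mul_le_mul_of_nonneg_left hrs (by linarith)
  have ht1 : (1:ℝ) ≤ (n:ℝ) ^ ((3:ℝ)/2) := by
    rw [hpow]; nlinarith
  nlinarith [sq_nonneg ((n:ℝ))]
end
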